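/- (Weighted one-dimensional Poincaré inequality from Mills ratio bound.) Let φ be a symmetric, strictly positive, bounded probability density on ℝ with CDF Φ, and suppose there exists C > 0 with φ(t)^{−1} ≤ C Φ(t)^{−1} for all t ≤ 0 (equivalently the Mills ratio m(x) = (1−Φ(x))/φ(x) is bounded on [0,∞)). Then for every q > 1, Muckenhoupt's constant B⁻ = sup_{x<0} (∫_{−∞}^x φ(t) dt)^{1/q} (∫_x^0 φ(t)^{−1/(q−1)} dt)^{(q−1)/q} satisfies B⁻ ≤ C(q−1)^{(q−1)/q} < ∞. -/

import Mathlib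

open MeasureTheory intervalIntegral

/-- Muckenhoupt bound from the Mills-ratio bound: if `φ(t)⁻¹ ≤ C Φ(t)⁻¹` for `t ≤ 0`, then
for every `x < 0`,
`(∫_{−∞}^x φ)^{1/q} (∫_x^0 φ^{−1/(q−1)})^{(q−1)/q} ≤ C (q−1)^{(q−1)/q}`,
so Muckenhoupt's constant `B⁻` is finite. -/
theorem muckenhoupt_constant_bound
    (φ : ℝ → ℝ) (q C M : ℝ) (hq : 1 < q) (hC : 0 < C)
    (hφ_pos : ∀ x, 0 < φ x) (hφ_symm : ∀ x, φ (-x) = φ x)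
    (hφ_bdd : ∀ x, φ x ≤ M) (hφ_prob : ∫ x, φ x = 1)
    (hmills : ∀ t : ℝ, t ≤ 0 → (φ t)⁻¹ ≤ C * (∫ u in Set.Iic t, φ u)⁻¹) :
    ∀ x : ℝ, x < 0 →
      (∫ t in Set.Iic x, φ t) ^ (1/q) *
        (∫ t in x..0, (φ t) ^ (-(1/(q-1)))) ^ ((q-1)/q)
      ≤ C * (q - 1) ^ ((q-1)/q) := by
  -- basic facts
  have hq1 : (0:ℝ) < q - 1 := by linarith
  have hq0 : (0:ℝ) < q := by linarith
  have hφ_int : Integrable φ := by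
    by_contra h
    rw [integral_undef h] at hφ_prob
    norm_num at hφ_prob
  set e : ℝ := 1/(q-1) with he_def
  have he : 0 < e := by positivity
  set Φ : ℝ → ℝ := fun t => ∫ u in Set.Iic t, φ u with hΦ_def
  have hΦ_int : ∀ t : ℝ, IntegrableOn φ (Set.Iic t) := fun t => hφ_int.integrableOn
  have hsupp : Function.support φ = Set.univ := by
    ext u; simp [Function.mem_support, (hφ_pos u).ne']
  have hΦ_pos : ∀ t, 0 < Φ t := by
    intro t
    rw [hΦ_def]
    rw [setIntegral_pos_iff_support_of_nonneg_ae
      (Filter.Eventually.of_forall fun u => (hφ_pos u).le) (hΦ_int t), hsupp, Set.univ_inter]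
    simp [Real.volume_Iic]
  have hΦ_mono : Monotone Φ := by
    intro s t hst
    exact setIntegral_mono_set (hΦ_int t) (Filter.Eventually.of_forall fun u => (hφ_pos u).le)
      (HasSubset.Subset.eventuallyLE (Set.Iic_subset_Iic.2 hst))
  have hΦ_sub : ∀ s t : ℝ, Φ t - Φ s = ∫ u in s..t, φ u := fun s t =>
    integral_Iic_sub_Iic (hΦ_int s) (hΦ_int t)
  have hΦ_strict : StrictMono Φ := by
    intro s t hst
    have h2 : 0 < ∫ u in s..t, φ u := by
      rw [intervalIntegral.integral_of_le hst.le]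
      rw [setIntegral_pos_iff_support_of_nonneg_ae
        (Filter.Eventually.of_forall fun u => (hφ_pos u).le) hφ_int.integrableOn, hsupp,
        Set.univ_inter]
      rw [Real.volume_Ioc]
      simp [hst]
    have := hΦ_sub s t
    linarith
  have hΦ_cont : Continuous Φ := by
    have hfe : Φ = fun t => Φ 0 + ∫ u in (0:ℝ)..t, φ u := by
      funext t
      have := hΦ_sub 0 t
      linarith
    rw [hfe]
    exact continuous_const.add
      (intervalIntegral.continuous_primitive (fun a b => hφ_int.intervalIntegrable) 0)
  intro x hx
  have haΦ : (∫ t in Set.Iic x, φ t) = Φ x := rfl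
  rw [haΦ]
  set a : ℝ := Φ x with ha_def
  have ha : 0 < a := hΦ_pos x
  have haB : a ≤ Φ 0 := hΦ_mono hx.le
  -- measurability and integrability of the integrand
  have hmeas : AEMeasurable (fun t => φ t ^ (-e)) :=
    hφ_int.aemeasurable.pow aemeasurable_const
  have hΦ_low : ∀ t ∈ Set.Icc x 0, a ≤ Φ t := fun t ht => hΦ_mono ht.1
  have hbound : ∀ t ∈ Set.Icc x 0, φ t ^ (-e) ≤ (C / a) ^ e := by
    intro t ht
    have h1 : (φ t)⁻¹ ≤ C * (Φ t)⁻¹ := hmills t ht.2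
    have h2 : C * (Φ t)⁻¹ ≤ C / a := by
      rw [div_eq_mul_inv]
      exact mul_le_mul_of_nonneg_left (inv_anti₀ ha (hΦ_low t ht)) hC.le
    calc φ t ^ (-e) = ((φ t)⁻¹) ^ e := by
          rw [← Real.rpow_neg_one (φ t), ← Real.rpow_mul (hφ_pos t).le]
          norm_num
      _ ≤ (C / a) ^ e := Real.rpow_le_rpow (inv_nonneg.2 (hφ_pos t).le)
          (h1.trans h2) he.le
  have hIntOn : IntegrableOn (fun t => φ t ^ (-e)) (Set.Icc x 0) := by
    apply Integrable.mono' (g := fun _ => (C / a) ^ e)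
      (show IntegrableOn (fun _ => (C / a) ^ e) (Set.Icc x 0) volume from integrableOn_const measure_Icc_lt_top.ne) hmeas.aestronglyMeasurable.restrict
    filter_upwards [ae_restrict_mem measurableSet_Icc] with t ht
    rw [Real.norm_eq_abs, abs_of_nonneg (Real.rpow_nonneg (hφ_pos t).le _)]
    exact hbound t ht
  -- the key estimate, for every κ > q - 1
  have key : ∀ κ : ℝ, q - 1 < κ →
      (∫ t in x..0, φ t ^ (-e)) ≤ C ^ (e+1) * κ * a ^ (-e) := by
    intro κ hκ
    have hκ0 : 0 < κ := lt_trans hq1 hκ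
    have hκe : 1 < κ * e := by
      rw [he_def, mul_one_div]
      exact (one_lt_div hq1).2 hκ
    set r : ℝ := (κ * e) ^ (e+1)⁻¹ with hr_def
    have hr1 : 1 < r := by
      rw [hr_def, Real.one_lt_rpow_iff_of_pos (by positivity)]
      exact Or.inl ⟨hκe, by positivity⟩
    have hr0 : 0 < r := lt_trans one_pos hr1
    have hrpow : r ^ (e+1) = κ * e := by
      rw [hr_def, ← Real.rpow_mul (by positivity), inv_mul_cancel₀ (by positivity),
        Real.rpow_one]
    -- elementary step inequality on [1, r]
    have sineq : ∀ s ∈ Set.Icc (1:ℝ) r, s - 1 ≤ κ * (1 - s ^ (-e)) := by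
      set u : ℝ → ℝ := fun y => κ * (1 - y ^ (-e)) - (y - 1) with hu_def
      have hu : ∀ s ∈ Set.Icc (1:ℝ) r, HasDerivAt u (κ * (e * s ^ (-e-1)) - 1) s := by
        intro s hs
        have hs0 : (0:ℝ) < s := lt_of_lt_of_le one_pos hs.1
        have h1 : HasDerivAt (fun y : ℝ => y ^ (-e)) ((-e) * s ^ (-e-1)) s :=
          Real.hasDerivAt_rpow_const (Or.inl hs0.ne')
        have h2 : HasDerivAt (fun y : ℝ => κ * (1 - y ^ (-e)))
            (κ * (0 - (-e) * s ^ (-e-1))) s :=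
          ((hasDerivAt_const s (1:ℝ)).sub h1).const_mul κ
        have h3 : HasDerivAt (fun y : ℝ => y - 1) (1 : ℝ) s :=
          (hasDerivAt_id s).sub_const 1
        have := h2.sub h3
        exact this.congr_deriv (by ring)
      have humono : MonotoneOn u (Set.Icc 1 r) := by
        apply monotoneOn_of_deriv_nonneg (convex_Icc 1 r)
          (fun s hs => (hu s hs).continuousAt.continuousWithinAt)
          (fun s hs =>
            (hu s (interior_subset hs)).differentiableAt.differentiableWithinAt)
        intro s hs
        rw [interior_Icc] at hs
        rw [(hu s ⟨hs.1.le, hs.2.le⟩).deriv]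
        have hs0 : (0:ℝ) < s := lt_trans one_pos hs.1
        have hsle : s ^ (e+1) ≤ κ * e := by
          rw [← hrpow]
          exact Real.rpow_le_rpow hs0.le hs.2.le (by positivity)
        have hspos : (0:ℝ) < s ^ (e+1) := Real.rpow_pos_of_pos hs0 _
        have hinv : (κ * e)⁻¹ ≤ s ^ (-e-1) := by
          rw [show -e-1 = -(e+1) by ring, Real.rpow_neg hs0.le]
          exact inv_anti₀ hspos hsle
        have : 1 ≤ κ * (e * s ^ (-e-1)) := by
          have h4 : κ * (e * (κ * e)⁻¹) ≤ κ * (e * s ^ (-e-1)) := by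
            apply mul_le_mul_of_nonneg_left (mul_le_mul_of_nonneg_left hinv he.le) hκ0.le
          have h5 : κ * (e * (κ * e)⁻¹) = 1 := by
            field_simp
          linarith
        linarith
      intro s hs
      have h0 : u 1 = 0 := by
        rw [hu_def]
        simp [Real.one_rpow]
      have := humono (Set.left_mem_Icc.2 hr1.le) hs hs.1
      rw [h0] at this
      rw [hu_def] at this
      simp only at this
      linarith
    -- step inequality in multiplicative form
    have step2 : ∀ A B : ℝ, 0 < A → A ≤ B → B ≤ r * A →
        A ^ (-(e+1)) * (B - A) ≤ κ * (A ^ (-e) - B ^ (-e)) := by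
      intro A B hA hAB hBr
      set s : ℝ := B / A with hs_def
      have hs1 : 1 ≤ s := (one_le_div hA).2 hAB
      have hsr : s ≤ r := (div_le_iff₀ hA).2 (by linarith)
      have hB : B = A * s := by
        rw [hs_def]; field_simp
      have hsin := sineq s ⟨hs1, hsr⟩
      have hBe : B ^ (-e) = A ^ (-e) * s ^ (-e) := by
        rw [hB, Real.mul_rpow hA.le (by positivity)]
      have hsplit : A ^ (-(e+1)) = A ^ (-e) * A⁻¹ := by
        rw [show -(e+1) = -e + (-1) by ring, Real.rpow_add hA, Real.rpow_neg_one]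
      have hstep1 : A ^ (-(e+1)) * (B - A) = A ^ (-e) * (s - 1) := by
        rw [hsplit, hB]
        field_simp
      rw [hstep1, hBe]
      calc A ^ (-e) * (s - 1) ≤ A ^ (-e) * (κ * (1 - s ^ (-e))) :=
            mul_le_mul_of_nonneg_left hsin (Real.rpow_nonneg hA.le _)
        _ = κ * (A ^ (-e) - A ^ (-e) * s ^ (-e)) := by ring
    -- geometric partition in Φ-values
    obtain ⟨n, hn⟩ := pow_unbounded_of_one_lt (Φ 0 / a) hr1
    have hvB : Φ 0 ≤ a * r ^ n := by
      rw [div_lt_iff₀ ha] at hn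
      nlinarith
    set v : ℕ → ℝ := fun i => min (a * r ^ i) (Φ 0) with hv_def
    have hv0 : v 0 = a := by
      rw [hv_def]
      simp [haB]
    have hvn : v n = Φ 0 := min_eq_right hvB
    have hvpos : ∀ i, 0 < v i := fun i => lt_min (by positivity) (hΦ_pos 0)
    have hvmono : ∀ i, v i ≤ v (i+1) := by
      intro i
      apply min_le_min _ le_rfl
      have : r ^ i ≤ r ^ (i+1) := pow_le_pow_right₀ hr1.le (Nat.le_succ i)
      nlinarith
    have hvr : ∀ i, v (i+1) ≤ r * v i := by
      intro i
      rcases le_total (a * r ^ i) (Φ 0) with h | h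
      · have h1 : v i = a * r ^ i := min_eq_left h
        rw [h1]
        calc v (i+1) ≤ a * r ^ (i+1) := min_le_left _ _
          _ = r * (a * r ^ i) := by ring
      · have h1 : v i = Φ 0 := min_eq_right h
        rw [h1]
        calc v (i+1) ≤ Φ 0 := min_le_right _ _
          _ ≤ r * Φ 0 := by nlinarith [hΦ_pos 0]
    have hva : ∀ i, a ≤ v i := by
      intro i
      apply le_min _ haB
      have : (1:ℝ) ≤ r ^ i := one_le_pow₀ hr1.le
      nlinarith
    -- choose partition points via IVT
    have hIVT : ∀ i : ℕ, ∃ t ∈ Set.Icc x 0, Φ t = v i := by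
      intro i
      have hmem : v i ∈ Set.Icc (Φ x) (Φ 0) := ⟨hva i, min_le_right _ _⟩
      obtain ⟨t, ht, hΦt⟩ := intermediate_value_Icc hx.le hΦ_cont.continuousOn hmem
      exact ⟨t, ht, hΦt⟩
    choose t ht hΦt using hIVT
    have ht0 : t 0 = x := hΦ_strict.injective (by rw [hΦt 0, hv0])
    have htn : t n = 0 := hΦ_strict.injective (by rw [hΦt n, hvn])
    have htmono : ∀ i, t i ≤ t (i+1) := by
      intro i
      rw [← hΦ_strict.le_iff_le, hΦt, hΦt]
      exact hvmono i
    have hIntSub : ∀ i, IntervalIntegrable (fun u => φ u ^ (-e)) volume (t i) (t (i+1)) := by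
      intro i
      apply MeasureTheory.IntegrableOn.intervalIntegrable
      apply hIntOn.mono_set
      rw [Set.uIcc_of_le (htmono i)]
      exact Set.Icc_subset_Icc (ht i).1 (ht (i+1)).2
    -- per-interval estimate
    have hstep : ∀ i, (∫ u in t i..t (i+1), φ u ^ (-e))
        ≤ C ^ (e+1) * κ * (v i ^ (-e) - v (i+1) ^ (-e)) := by
      intro i
      have hpt : ∀ u ∈ Set.Icc (t i) (t (i+1)),
          φ u ^ (-e) ≤ (C ^ (e+1) * v i ^ (-(e+1))) * φ u := by
        intro u hu
        have hu0 : u ≤ 0 := le_trans hu.2 (ht (i+1)).2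
        have hux : x ≤ u := le_trans (ht i).1 hu.1
        have hΦu : v i ≤ Φ u := by
          rw [← hΦt i]
          exact hΦ_mono hu.1
        have h1 : (φ u)⁻¹ ≤ C * (Φ u)⁻¹ := hmills u hu0
        have h2 : ((φ u)⁻¹) ^ (e+1) ≤ (C * (Φ u)⁻¹) ^ (e+1) :=
          Real.rpow_le_rpow (inv_nonneg.2 (hφ_pos u).le) h1 (by positivity)
        have h3 : ((φ u)⁻¹) ^ (e+1) = φ u ^ (-(e+1)) := by
          rw [← Real.rpow_neg_one (φ u), ← Real.rpow_mul (hφ_pos u).le]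
          norm_num
        have h4 : (C * (Φ u)⁻¹) ^ (e+1) = C ^ (e+1) * (Φ u) ^ (-(e+1)) := by
          rw [Real.mul_rpow hC.le (inv_nonneg.2 (hΦ_pos u).le), ← Real.rpow_neg_one (Φ u),
            ← Real.rpow_mul (hΦ_pos u).le]
          norm_num
        have h5 : (Φ u) ^ (-(e+1)) ≤ v i ^ (-(e+1)) :=
          Real.rpow_le_rpow_of_nonpos (hvpos i) hΦu (by linarith)
        have h6 : φ u ^ (-(e+1)) ≤ C ^ (e+1) * v i ^ (-(e+1)) := by
          rw [← h3]
          calc ((φ u)⁻¹) ^ (e+1) ≤ (C * (Φ u)⁻¹) ^ (e+1) := h2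
            _ = C ^ (e+1) * (Φ u) ^ (-(e+1)) := h4
            _ ≤ C ^ (e+1) * v i ^ (-(e+1)) :=
                mul_le_mul_of_nonneg_left h5 (Real.rpow_nonneg hC.le _)
        have h7 : φ u ^ (-e) = φ u ^ (-(e+1)) * φ u := by
          rw [show -e = -(e+1) + 1 by ring, Real.rpow_add (hφ_pos u), Real.rpow_one]
        rw [h7]
        exact mul_le_mul_of_nonneg_right h6 (hφ_pos u).le
      have hmono_int : (∫ u in t i..t (i+1), φ u ^ (-e))
          ≤ ∫ u in t i..t (i+1), (C ^ (e+1) * v i ^ (-(e+1))) * φ u := by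
        apply intervalIntegral.integral_mono_on (htmono i) (hIntSub i)
          ((hφ_int.const_mul _).intervalIntegrable) hpt
      have hint_phi : (∫ u in t i..t (i+1), (C ^ (e+1) * v i ^ (-(e+1))) * φ u)
          = C ^ (e+1) * (v i ^ (-(e+1))) * (v (i+1) - v i) := by
        rw [intervalIntegral.integral_const_mul, ← hΦ_sub (t i) (t (i+1)), hΦt, hΦt]
      calc (∫ u in t i..t (i+1), φ u ^ (-e))
          ≤ C ^ (e+1) * (v i ^ (-(e+1))) * (v (i+1) - v i) := by
            rw [← hint_phi]; exact hmono_int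
        _ = C ^ (e+1) * (v i ^ (-(e+1)) * (v (i+1) - v i)) := by ring
        _ ≤ C ^ (e+1) * (κ * (v i ^ (-e) - v (i+1) ^ (-e))) := by
            apply mul_le_mul_of_nonneg_left
              (step2 (v i) (v (i+1)) (hvpos i) (hvmono i) (hvr i))
              (Real.rpow_nonneg hC.le _)
        _ = C ^ (e+1) * κ * (v i ^ (-e) - v (i+1) ^ (-e)) := by ring
    -- sum up and telescope
    have hsum := intervalIntegral.sum_integral_adjacent_intervals
      (f := fun u => φ u ^ (-e)) (μ := volume) (a := t) (n := n) (fun i _ => hIntSub i)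
    rw [ht0, htn] at hsum
    rw [← hsum]
    calc (∑ i ∈ Finset.range n, ∫ u in t i..t (i+1), φ u ^ (-e))
        ≤ ∑ i ∈ Finset.range n, C ^ (e+1) * κ * (v i ^ (-e) - v (i+1) ^ (-e)) :=
          Finset.sum_le_sum fun i _ => hstep i
      _ = C ^ (e+1) * κ * (v 0 ^ (-e) - v n ^ (-e)) := by
          rw [← Finset.mul_sum, Finset.sum_range_sub' (fun i => v i ^ (-e))]
      _ ≤ C ^ (e+1) * κ * a ^ (-e) := by
          rw [hv0]
          have h1 : (0:ℝ) ≤ v n ^ (-e) := Real.rpow_nonneg (hvpos n).le _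
          have h2 : (0:ℝ) ≤ C ^ (e+1) * κ := by positivity
          nlinarith
  -- pass to the limit κ → q - 1
  have hkey2 : (∫ t in x..0, φ t ^ (-e)) ≤ C ^ (e+1) * (q-1) * a ^ (-e) := by
    apply le_of_forall_pos_le_add
    intro δ hδ
    have hca : 0 < C ^ (e+1) * a ^ (-e) := by
      have := Real.rpow_pos_of_pos hC (e+1)
      have := Real.rpow_pos_of_pos ha (-e)
      positivity
    have hκ : q - 1 < (q-1) + δ / (C ^ (e+1) * a ^ (-e)) := by
      have : 0 < δ / (C ^ (e+1) * a ^ (-e)) := by positivity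
      linarith
    calc (∫ t in x..0, φ t ^ (-e))
        ≤ C ^ (e+1) * ((q-1) + δ / (C ^ (e+1) * a ^ (-e))) * a ^ (-e) := key _ hκ
      _ = C ^ (e+1) * (q-1) * a ^ (-e) + δ := by
          field_simp
  -- final algebra
  have hJ0 : 0 ≤ ∫ t in x..0, φ t ^ (-e) :=
    intervalIntegral.integral_nonneg hx.le fun u _ => Real.rpow_nonneg (hφ_pos u).le _
  have hw : (0:ℝ) ≤ (q-1)/q := by positivity
  have hexp1 : (e+1) * ((q-1)/q) = 1 := by
    rw [he_def]
    field_simp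
    ring
  have hexp2 : (-e) * ((q-1)/q) = -(1/q) := by
    rw [he_def]
    field_simp
  have hmain : (∫ t in x..0, φ t ^ (-e)) ^ ((q-1)/q)
      ≤ C * (q-1) ^ ((q-1)/q) * a ^ (-(1/q)) := by
    calc (∫ t in x..0, φ t ^ (-e)) ^ ((q-1)/q)
        ≤ (C ^ (e+1) * (q-1) * a ^ (-e)) ^ ((q-1)/q) :=
          Real.rpow_le_rpow hJ0 hkey2 hw
      _ = (C ^ (e+1)) ^ ((q-1)/q) * (q-1) ^ ((q-1)/q) * (a ^ (-e)) ^ ((q-1)/q) := by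
          rw [Real.mul_rpow (by positivity) (Real.rpow_nonneg ha.le _),
            Real.mul_rpow (Real.rpow_nonneg hC.le _) hq1.le]
      _ = C * (q-1) ^ ((q-1)/q) * a ^ (-(1/q)) := by
          rw [← Real.rpow_mul hC.le, ← Real.rpow_mul ha.le, hexp1, hexp2, Real.rpow_one]
  calc a ^ (1/q) * (∫ t in x..0, φ t ^ (-e)) ^ ((q-1)/q)
      ≤ a ^ (1/q) * (C * (q-1) ^ ((q-1)/q) * a ^ (-(1/q))) :=
        mul_le_mul_of_nonneg_left hmain (Real.rpow_nonneg ha.le _)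
    _ = C * (q-1) ^ ((q-1)/q) * (a ^ (1/q) * a ^ (-(1/q))) := by ring
    _ = C * (q-1) ^ ((q-1)/q) := by
        rw [← Real.rpow_add ha, add_neg_cancel, Real.rpow_zero, mul_one]
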